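/- arXiv:1703.03143 — 4 statements merged into one kernel-verified Lean document; each statement's English description precedes it below -/
import Mathlib

section
/- Let G be a non-abelian group. Then the restricted direct power G^(∞) is not q-compact: there exists a system S of equations with constants from G^(∞) in two variables x, y whose solution set is contained in the solution set of [x, y] = 1, but no finite subsystem of S has its solution set contained in that of [x, y] = 1. -/
/-- Terms of the group language with constants from `G` and variables among `x_1,...,x_n`. -/
inductive GTerm (G : Type) (n : ℕ) where
  | var : Fin n → GTerm G n
  | const : G → GTerm G n
  | one : GTerm G n
  | mul : GTerm G n → GTerm G n → GTerm G n
  | inv : GTerm G n → GTerm G n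

def GTerm.eval {G : Type} [Group G] {n : ℕ} (v : Fin n → G) : GTerm G n → G
  | .var i => v i
  | .const g => g
  | .one => 1
  | .mul t s => t.eval v * s.eval v
  | .inv t => (t.eval v)⁻¹

def SolSet {G : Type} [Group G] {n : ℕ} (S : Set (GTerm G n × GTerm G n)) :
    Set (Fin n → G) :=
  {v | ∀ e ∈ S, e.1.eval v = e.2.eval v}

/-- The restricted direct power `G^(∞)`: the subgroup of the countable direct power
consisting of sequences with finite support. -/
def restrictedPower (G : Type) [Group G] : Subgroup (ℕ → G) where
  carrier := {f | {i | f i ≠ 1}.Finite}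
  one_mem' := by simp
  mul_mem' := by
    intro f g hf hg
    apply (Set.Finite.union hf hg).subset
    intro i hi
    by_contra h
    simp only [Set.mem_union, Set.mem_setOf_eq, not_or, not_not] at h
    exact hi (show (f * g) i = 1 by simp [h.1, h.2])
  inv_mem' := by
    intro f hf
    apply hf.subset
    intro i hi
    simp only [Set.mem_setOf_eq, Pi.inv_apply, ne_eq, inv_eq_one] at hi ⊢
    exact hi

/-- The equation `[x, y] = 1` in two variables. -/
def commEq (H : Type) [Group H] : GTerm H 2 × GTerm H 2 :=
  (.mul (.mul (.mul (.inv (.var 0)) (.inv (.var 1))) (.var 0)) (.var 1), .one)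

/-!
The system consists of the equations `[x, y] = [x c, y]` for all constants `c ∈ G^(∞)`;
the instance `c = x⁻¹` already forces `[x, y] = 1`. Finitely many constants have finite
supports, so they are all trivial at some coordinate `m`, and a non-commuting pair `a, b` of `G`
placed at coordinate `m` solves those finitely many equations without commuting.
-/

namespace GTerm

variable {G : Type} {n : ℕ}

def comm (t s : GTerm G n) : GTerm G n := .mul (.mul (.mul (.inv t) (.inv s)) t) s

@[simp]
lemma eval_comm [Group G] (v : Fin n → G) (t s : GTerm G n) :
    (comm t s).eval v = (t.eval v)⁻¹ * (s.eval v)⁻¹ * t.eval v * s.eval v := rfl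

end GTerm

lemma commute_iff_inv_mul_inv_mul_mul_eq_one {H : Type} [Group H] {a b : H} :
    Commute a b ↔ a⁻¹ * b⁻¹ * a * b = 1 := by
  rw [← Commute.inv_inv_iff, ← commutatorElement_eq_one_iff_commute, commutatorElement_def,
    inv_inv, inv_inv]

section ShiftedCommutator

variable {H : Type}

def shiftedCommEq (c : H) : GTerm H 2 × GTerm H 2 :=
  (GTerm.comm (.var 0) (.var 1), GTerm.comm (.mul (.var 0) (.const c)) (.var 1))

lemma shiftedCommEq_injective : Function.Injective (shiftedCommEq (H := H)) := by
  intro c d h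
  simpa [shiftedCommEq, GTerm.comm] using h

variable [Group H]

lemma mem_solSet_commEq_iff {v : Fin 2 → H} :
    v ∈ SolSet {commEq H} ↔ Commute (v 0) (v 1) := by
  rw [commute_iff_inv_mul_inv_mul_mul_eq_one]
  simp [SolSet, commEq, GTerm.eval]

lemma mem_solSet_image_shiftedCommEq_iff {C : Set H} {v : Fin 2 → H} :
    v ∈ SolSet (shiftedCommEq '' C) ↔
      ∀ c ∈ C, (v 0)⁻¹ * (v 1)⁻¹ * v 0 * v 1 = (v 0 * c)⁻¹ * (v 1)⁻¹ * (v 0 * c) * v 1 := by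
  simp [SolSet, shiftedCommEq, GTerm.eval]

/-- Taking `c = x⁻¹` turns `[x, y] = [x c, y]` into `[x, y] = 1`. -/
lemma solSet_range_shiftedCommEq_subset :
    SolSet (Set.range (shiftedCommEq (H := H))) ⊆ SolSet {commEq H} := by
  intro v hv
  rw [← Set.image_univ, mem_solSet_image_shiftedCommEq_iff] at hv
  rw [mem_solSet_commEq_iff, commute_iff_inv_mul_inv_mul_mul_eq_one]
  simpa using hv (v 0)⁻¹ trivial

end ShiftedCommutator

namespace restrictedPower

variable {G : Type} [Group G]

lemma exists_forall_apply_eq_one {C : Set (restrictedPower G)} (hC : C.Finite) :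
    ∃ m, ∀ c ∈ C, (c : ℕ → G) m = 1 := by
  obtain ⟨m, hm⟩ := (hC.biUnion fun c _ => c.2).infinite_compl.nonempty
  exact ⟨m, fun c hc => by_contra fun h => hm (Set.mem_biUnion hc h)⟩

def mulSingle (m : ℕ) : G →* restrictedPower G :=
  (MonoidHom.mulSingle (fun _ => G) m).codRestrict _ fun g =>
    (Set.finite_singleton m).subset fun i hi => by
      by_contra h
      exact hi (Pi.mulSingle_eq_of_ne (M := fun _ => G) h g)

@[simp]
lemma coe_mulSingle (m : ℕ) (g : G) : (mulSingle m g : ℕ → G) = Pi.mulSingle m g := rfl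

lemma mulSingle_injective (m : ℕ) : Function.Injective (mulSingle (G := G) m) := by
  intro a b h
  simpa using congrFun (congrArg Subtype.val h) m

/-- Away from `m` both `x` and `y` are trivial, and at `m` the constant `c` is. -/
lemma mulSingle_mem_solSet_image_shiftedCommEq {C : Set (restrictedPower G)} {m : ℕ}
    (hm : ∀ c ∈ C, (c : ℕ → G) m = 1) (a b : G) :
    ![mulSingle m a, mulSingle m b] ∈ SolSet (shiftedCommEq '' C) := by
  rw [mem_solSet_image_shiftedCommEq_iff]
  intro c hc
  ext i
  rcases eq_or_ne i m with rfl | hi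
  · simp [hm c hc]
  · simp [Pi.mulSingle_eq_of_ne hi]

end restrictedPower

/-- For a non-abelian group `G`, the restricted direct power `G^(∞)` is not q-compact:
there is a system `S` of equations with constants, in two variables, whose solution set
is contained in that of `[x,y] = 1`, while no finite subsystem of `S` has its solution
set contained in that of `[x,y] = 1`. -/
theorem restricted_power_not_qcompact {G : Type} [Group G]
    (hna : ∃ a b : G, a * b ≠ b * a) :
    ∃ S : Set (GTerm (restrictedPower G) 2 × GTerm (restrictedPower G) 2),
      SolSet S ⊆ SolSet {commEq (restrictedPower G)} ∧
      ∀ S' ⊆ S, S'.Finite → ¬ (SolSet S' ⊆ SolSet {commEq (restrictedPower G)}) := by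
  obtain ⟨a, b, hab⟩ := hna
  refine ⟨Set.range shiftedCommEq, solSet_range_shiftedCommEq_subset, fun S' hS' hfin hsub => ?_⟩
  rw [← Set.image_univ] at hS'
  obtain ⟨C, -, rfl⟩ := Set.subset_image_iff.1 hS'
  obtain ⟨m, hm⟩ := restrictedPower.exists_forall_apply_eq_one
    (hfin.of_finite_image shiftedCommEq_injective.injOn)
  have hcomm := mem_solSet_commEq_iff.1
    (hsub (restrictedPower.mulSingle_mem_solSet_image_shiftedCommEq hm a b))
  exact hab (hcomm.of_map (restrictedPower.mulSingle_injective m))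
end

section
/- Let V be a variety of groups such that every group in V is equationally Noetherian (with respect to equations with constants). Then every group in V is abelian. -/
/-- A group is equationally Noetherian if every system of group equations with
constants, in finitely many variables, is equivalent to a finite subsystem. -/
def EquationallyNoetherian (G : Type) [Group G] : Prop :=
  ∀ (n : ℕ) (S : Set (GTerm G n × GTerm G n)),
    ∃ S' ⊆ S, S'.Finite ∧ SolSet S' = SolSet S

open Subgroup

lemma Pi.mulSingle_left_injective {ι M : Type*} [DecidableEq ι] [One M] {a : M} (ha : a ≠ 1) :
    Function.Injective fun i : ι => Pi.mulSingle i a := by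
  intro i j hij
  by_contra hne
  simpa [Pi.mulSingle_eq_of_ne hne, ha] using congrFun hij i

variable {G : Type}

def commEquation (c : G) : GTerm G 1 × GTerm G 1 :=
  (.mul (.const c) (.var 0), .mul (.var 0) (.const c))

lemma commEquation_injective : Function.Injective (commEquation (G := G)) := by
  intro c d h
  simpa [commEquation] using h

lemma mem_solSet_image_commEquation [Group G] {s : Set G} {v : Fin 1 → G} :
    v ∈ SolSet (commEquation '' s) ↔ v 0 ∈ centralizer s := by
  simp [SolSet, commEquation, GTerm.eval, mem_centralizer_iff]

lemma EquationallyNoetherian.exists_finite_centralizer_eq [Group G]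
    (hG : EquationallyNoetherian G) (s : Set G) :
    ∃ t ⊆ s, t.Finite ∧ centralizer t = centralizer s := by
  obtain ⟨S', hS's, hS'fin, hsol⟩ := hG 1 (commEquation '' s)
  obtain ⟨t, hts, rfl⟩ := Set.subset_image_iff.mp hS's
  refine ⟨t, hts, hS'fin.of_finite_image commEquation_injective.injOn, ?_⟩
  ext g
  simpa only [mem_solSet_image_commEquation] using Set.ext_iff.mp hsol (fun _ => g)

lemma not_equationallyNoetherian_pi [Group G] (ι : Type) [Infinite ι] {a b : G}
    (hab : a * b ≠ b * a) : ¬ EquationallyNoetherian (ι → G) := by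
  classical
  intro hN
  have ha : a ≠ 1 := by rintro rfl; simp at hab
  obtain ⟨t, hts, htfin, hcent⟩ :=
    hN.exists_finite_centralizer_eq (Set.range fun i => Pi.mulSingle i a)
  have hused : {i | Pi.mulSingle i a ∈ t}.Finite :=
    htfin.preimage (Pi.mulSingle_left_injective ha).injOn
  obtain ⟨i, hi⟩ := hused.infinite_compl.nonempty
  have hmem : Pi.mulSingle i b ∈ centralizer t := by
    rw [mem_centralizer_iff]
    rintro _ hj
    obtain ⟨j, rfl⟩ := hts hj
    exact Pi.mulSingle_commute (f := fun _ : ι => G) (fun hji : j = i => hi (hji ▸ hj)) a b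
  rw [hcent, mem_centralizer_iff] at hmem
  apply hab
  simpa only [← Pi.mulSingle_mul, Pi.mulSingle_inj] using hmem _ ⟨i, rfl⟩

theorem variety_equationally_noetherian_abelian_general
    (V : (G : Type) → Group G → Prop)
    (hprod : ∀ (ι : Type) (G : ι → Type) [iG : ∀ i, Group (G i)],
      (∀ i, V (G i) (iG i)) → V (∀ i, G i) inferInstance)
    (hN : ∀ (G : Type) [iG : Group G], V G iG → EquationallyNoetherian G) :
    ∀ (G : Type) [iG : Group G], V G iG → ∀ a b : G, a * b = b * a := by
  intro G _ hG a b
  by_contra hab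
  exact not_equationallyNoetherian_pi ℕ hab (hN _ (hprod ℕ (fun _ => G) fun _ => hG))

/-- If `V` is a variety of groups (a class closed under subgroups, homomorphic images
and arbitrary direct products) all of whose members are equationally Noetherian (with
constants), then every group in `V` is abelian. -/
theorem variety_equationally_noetherian_abelian
    (V : (G : Type) → Group G → Prop)
    (hsub : ∀ (G : Type) [iG : Group G], V G iG → ∀ H : Subgroup G, V H inferInstance)
    (hquot : ∀ (G H : Type) [iG : Group G] [iH : Group H] (f : G →* H),
      Function.Surjective f → V G iG → V H iH)
    (hprod : ∀ (ι : Type) (G : ι → Type) [iG : ∀ i, Group (G i)],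
      (∀ i, V (G i) (iG i)) → V (∀ i, G i) inferInstance)
    (hN : ∀ (G : Type) [iG : Group G], V G iG → EquationallyNoetherian G) :
    ∀ (G : Type) [iG : Group G], V G iG → ∀ a b : G, a * b = b * a :=
  variety_equationally_noetherian_abelian_general V hprod hN
end

section
/- A variety V of groups has the property that every group in V is equationally Noetherian (with constants) if and only if V is a variety of abelian groups. -/
/-!
In an abelian group, an equation with constants in `x₁, …, xₙ` reads `φₓ μ = c`, where `μ ∈ ℤⁿ`
is its exponent vector and `φₓ : ℤⁿ → G` is `μ ↦ ∏ xᵢ ^ μᵢ`. As `ℤⁿ` is Noetherian, the exponent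
vectors of finitely many equations of a system span those of all of them. Two solutions of these
finitely many equations give maps `φₓ` agreeing on that span, so either every such solution solves
the whole system, or adding one violated equation leaves a finite system with no solution at all.

Conversely, if `a, b ∈ G` do not commute, the power `G^ℕ` lies in the variety, and there the
system `x cᵢ = cᵢ x`, with `cᵢ` equal to `a` at coordinate `i` and `1` elsewhere, has no equivalent
finite subsystem: one that omits equation `j` is solved by `b` placed at coordinate `j`.
-/

theorem Submodule.exists_finite_subset_span_eq {R M : Type*} [Ring R] [AddCommGroup M]
    [Module R M] [IsNoetherian R M] (s : Set M) :
    ∃ t ⊆ s, t.Finite ∧ span R t = span R s := by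
  obtain ⟨g, hg⟩ := IsNoetherian.noetherian (span R s)
  obtain ⟨t, hts, hgt⟩ :=
    subset_span_finite_of_subset_span (hg ▸ subset_span : (g : Set M) ⊆ span R s)
  refine ⟨t, hts, t.finite_toSet, le_antisymm (span_mono hts) ?_⟩
  rw [← hg, span_le]
  exact hgt

theorem exists_finite_subsystem_of_isNoetherian {R M A X ι : Type*} [Ring R] [AddCommGroup M]
    [Module R M] [IsNoetherian R M] [AddCommGroup A] [Module R A]
    (φ : X → M →ₗ[R] A) (lhs : ι → M) (rhs : ι → A) (S : Set ι) :
    ∃ E ⊆ S, E.Finite ∧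
      ∀ x, (∀ i ∈ E, φ x (lhs i) = rhs i) ↔ ∀ i ∈ S, φ x (lhs i) = rhs i := by
  suffices ∃ E ⊆ S, E.Finite ∧
      ∀ x, (∀ i ∈ E, φ x (lhs i) = rhs i) → ∀ i ∈ S, φ x (lhs i) = rhs i by
    obtain ⟨E, hES, hE, hsol⟩ := this
    exact ⟨E, hES, hE, fun x => ⟨hsol x, fun h i hi => h i (hES hi)⟩⟩
  obtain ⟨E, hES, hE, hspan⟩ := Set.exists_subset_image_finite_and.1
    (Submodule.exists_finite_subset_span_eq (R := R) (lhs '' S))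
  have agree : ∀ x y, (∀ i ∈ E, φ x (lhs i) = rhs i) → (∀ i ∈ E, φ y (lhs i) = rhs i) →
      ∀ i ∈ S, φ x (lhs i) = φ y (lhs i) := by
    intro x y hx hy i hi
    have : Submodule.span R (lhs '' E) ≤ LinearMap.eqLocus (φ x) (φ y) := by
      rw [Submodule.span_le]
      rintro _ ⟨j, hj, rfl⟩
      exact (hx j hj).trans (hy j hj).symm
    exact this (hspan ▸ Submodule.subset_span ⟨i, hi, rfl⟩)
  by_cases h : ∃ x₀, (∀ i ∈ E, φ x₀ (lhs i) = rhs i) ∧ ∃ i₀ ∈ S, φ x₀ (lhs i₀) ≠ rhs i₀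
  · obtain ⟨x₀, hx₀, i₀, hi₀, hne⟩ := h
    refine ⟨insert i₀ E, Set.insert_subset hi₀ hES, hE.insert i₀, fun x hx => ?_⟩
    have hxE : ∀ i ∈ E, φ x (lhs i) = rhs i := fun i hi => hx i (Set.mem_insert_of_mem _ hi)
    exact absurd ((agree x₀ x hx₀ hxE i₀ hi₀).trans (hx i₀ (Set.mem_insert _ _))) hne
  · push Not at h
    exact ⟨E, hES, hE, h⟩

namespace GTerm

variable {G : Type} {n : ℕ}

def exponents : GTerm G n → (Fin n → ℤ)
  | var i => Pi.single i 1
  | const _ => 0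
  | one => 0
  | mul t s => t.exponents + s.exponents
  | inv t => -t.exponents

variable [CommGroup G]

def constant : GTerm G n → G
  | var _ => 1
  | const g => g
  | one => 1
  | mul t s => t.constant * s.constant
  | inv t => t.constant⁻¹

open Additive in
theorem ofMul_eval (v : Fin n → G) (t : GTerm G n) :
    ofMul (t.eval v) =
      Fintype.linearCombination ℤ (fun i => ofMul (v i)) t.exponents + ofMul t.constant := by
  induction t with
  | var i => simp [eval, exponents, constant]
  | const g => simp [eval, exponents, constant]
  | one => simp [eval, exponents, constant]
  | mul t s ht hs =>
    simp only [eval, exponents, constant, ofMul_mul, ht, hs, map_add]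
    abel
  | inv t ht => simp only [eval, exponents, constant, ofMul_inv, ht, map_neg, neg_add]

open Additive in
theorem eval_eq_eval_iff (v : Fin n → G) (t s : GTerm G n) :
    t.eval v = s.eval v ↔
      Fintype.linearCombination ℤ (fun i => ofMul (v i)) (t.exponents - s.exponents) =
        ofMul (s.constant / t.constant) := by
  rw [← ofMul.injective.eq_iff, ofMul_eval, ofMul_eval, map_sub, ofMul_div,
    sub_eq_sub_iff_add_eq_add, add_comm (ofMul s.constant)]

end GTerm

open Additive in
theorem equationallyNoetherian_of_commGroup (G : Type) [CommGroup G] :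
    EquationallyNoetherian G := by
  intro n S
  obtain ⟨E, hES, hE, hsol⟩ := exists_finite_subsystem_of_isNoetherian
    (fun v : Fin n → G => Fintype.linearCombination ℤ (fun i => ofMul (v i)))
    (fun e => e.1.exponents - e.2.exponents) (fun e => ofMul (e.2.constant / e.1.constant)) S
  refine ⟨E, hES, hE, Set.ext fun v => ?_⟩
  simpa only [SolSet, Set.mem_ofPred_eq, GTerm.eval_eq_eval_iff] using hsol v

theorem commute_of_equationallyNoetherian_pi {ι G : Type} [Infinite ι] [Group G]
    (h : EquationallyNoetherian (ι → G)) (a b : G) : Commute a b := by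
  classical
  let eqn : ι → GTerm (ι → G) 1 × GTerm (ι → G) 1 := fun i =>
    (.mul (.var 0) (.const (Pi.mulSingle i a)), .mul (.const (Pi.mulSingle i a)) (.var 0))
  obtain ⟨F, -, hF, hsol⟩ := Set.exists_subset_image_finite_and.1 (h 1 (eqn '' Set.univ))
  obtain ⟨j, hj⟩ := hF.infinite_compl.nonempty
  let v : Fin 1 → ι → G := fun _ => Pi.mulSingle j b
  have hv : v ∈ SolSet (eqn '' F) := by
    rintro _ ⟨i, hi, rfl⟩
    exact (Pi.mulSingle_commute (f := fun _ => G) (ne_of_mem_of_not_mem hi hj).symm b a).eq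
  rw [hsol] at hv
  have hba := congrFun (hv (eqn j) ⟨j, trivial, rfl⟩) j
  simp only [eqn, v, GTerm.eval, Pi.mul_apply, Pi.mulSingle_eq_same] at hba
  exact hba.symm

theorem group_variety_noetherian_iff_abelian_general
    (V : (G : Type) → Group G → Prop)
    (hprod : ∀ (ι : Type) (G : ι → Type) [iG : ∀ i, Group (G i)],
      (∀ i, V (G i) (iG i)) → V (∀ i, G i) inferInstance)
    :
    (∀ (G : Type) [iG : Group G], V G iG → EquationallyNoetherian G) ↔
    (∀ (G : Type) [iG : Group G], V G iG → ∀ a b : G, a * b = b * a) := by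
  refine ⟨fun h G _ hG => commute_of_equationallyNoetherian_pi (ι := ℕ) ?_, fun h G iG hG => ?_⟩
  · exact h _ (hprod ℕ (fun _ => G) fun _ => hG)
  · let _ : CommGroup G := { iG with mul_comm := h G hG }
    exact equationallyNoetherian_of_commGroup G

/-- A variety `V` of groups (a class closed under subgroups, homomorphic images and
arbitrary direct products) has all members equationally Noetherian (with constants)
iff all members are abelian. -/
theorem group_variety_noetherian_iff_abelian
    (V : (G : Type) → Group G → Prop)
    (hsub : ∀ (G : Type) [iG : Group G], V G iG → ∀ H : Subgroup G, V H inferInstance)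
    (hquot : ∀ (G H : Type) [iG : Group G] [iH : Group H] (f : G →* H),
      Function.Surjective f → V G iG → V H iH)
    (hprod : ∀ (ι : Type) (G : ι → Type) [iG : ∀ i, Group (G i)],
      (∀ i, V (G i) (iG i)) → V (∀ i, G i) inferInstance)
    :
    (∀ (G : Type) [iG : Group G], V G iG → EquationallyNoetherian G) ↔
    (∀ (G : Type) [iG : Group G], V G iG → ∀ a b : G, a * b = b * a) :=
  group_variety_noetherian_iff_abelian_general V hprod
end

section
/- Let W be the (restricted or unrestricted) wreath product G wr A of a non-abelian group G and an infinite group A. Then the restricted countable direct power G^(∞) embeds into W; consequently W is not equationally Noetherian. -/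
section Wreath

variable (G A : Type) [Group G] [Group A]

/-- The shift automorphism of the base group `A → G`. -/
def shiftAut (a : A) : (A → G) ≃* (A → G) where
  toFun f := fun b => f (b * a)
  invFun f := fun b => f (b * a⁻¹)
  left_inv f := by funext b; simp [mul_assoc]
  right_inv f := by funext b; simp [mul_assoc]
  map_mul' f g := rfl

/-- The action of `A` on the base group `A → G` by permuting coordinates. -/
def wreathAction : A →* MulAut (A → G) where
  toFun a := shiftAut G A a
  map_one' := by
    ext f b
    simp [shiftAut]
  map_mul' a b := by
    ext f c
    simp [shiftAut, MulAut.mul_def, mul_assoc]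

/-- The unrestricted wreath product `G wr A`. -/
def WreathFull : Type := (A → G) ⋊[wreathAction G A] A

instance : Group (WreathFull G A) :=
  inferInstanceAs (Group ((A → G) ⋊[wreathAction G A] A))

/-- The finitely supported base subgroup `⨁_{a ∈ A} G` of `A → G`. -/
def resBase : Subgroup (A → G) where
  carrier := {f | {b | f b ≠ 1}.Finite}
  one_mem' := by simp
  mul_mem' := by
    intro f g hf hg
    apply (Set.Finite.union hf hg).subset
    intro b hb
    by_contra h
    simp only [Set.mem_union, Set.mem_setOf_eq, not_or, not_not] at h
    exact hb (show (f * g) b = 1 by simp [h.1, h.2])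
  inv_mem' := by
    intro f hf
    apply hf.subset
    intro b hb
    simp only [Set.mem_setOf_eq, Pi.inv_apply, ne_eq, inv_eq_one] at hb ⊢
    exact hb

/-- The shift automorphism of the restricted base group. -/
def shiftAutRes (a : A) : ↥(resBase G A) ≃* ↥(resBase G A) where
  toFun f := ⟨fun b => f.1 (b * a),
    Set.Finite.preimage ((mul_left_injective a).injOn) f.2⟩
  invFun f := ⟨fun b => f.1 (b * a⁻¹),
    Set.Finite.preimage ((mul_left_injective a⁻¹).injOn) f.2⟩
  left_inv f := by
    apply Subtype.ext
    funext b
    simp [mul_assoc]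
  right_inv f := by
    apply Subtype.ext
    funext b
    simp [mul_assoc]
  map_mul' f g := rfl

/-- The action of `A` on the restricted base group by permuting coordinates. -/
def wreathActionRes : A →* MulAut ↥(resBase G A) where
  toFun a := shiftAutRes G A a
  map_one' := by
    ext f b
    simp [shiftAutRes]
  map_mul' a b := by
    ext f c
    simp [shiftAutRes, MulAut.mul_def, mul_assoc]

/-- The restricted wreath product `G wr A`. -/
def WreathRes : Type := ↥(resBase G A) ⋊[wreathActionRes G A] A

instance : Group (WreathRes G A) :=
  inferInstanceAs (Group (↥(resBase G A) ⋊[wreathActionRes G A] A))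

end Wreath

open Function

namespace GTerm

variable {G H : Type} {n : ℕ}

def map (φ : G → H) : GTerm G n → GTerm H n
  | .var i => .var i
  | .const g => .const (φ g)
  | .one => .one
  | .mul t s => .mul (t.map φ) (s.map φ)
  | .inv t => .inv (t.map φ)

theorem eval_map [Group G] [Group H] (φ : G →* H) (v : Fin n → G) :
    ∀ t : GTerm G n, (t.map φ).eval (φ ∘ v) = φ (t.eval v)
  | .var _ => rfl
  | .const _ => rfl
  | .one => φ.map_one.symm
  | .mul t s => by simp only [map, eval, eval_map φ v t, eval_map φ v s, map_mul]
  | .inv t => by simp only [map, eval, eval_map φ v t, map_inv]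

end GTerm

section Transfer

variable {G H : Type} [Group G] [Group H] {n : ℕ}

theorem comp_mem_solSet_map_iff {φ : G →* H} (hφ : Injective φ)
    (S : Set (GTerm G n × GTerm G n)) (v : Fin n → G) :
    φ ∘ v ∈ SolSet (Prod.map (GTerm.map φ) (GTerm.map φ) '' S) ↔ v ∈ SolSet S := by
  simp only [SolSet, Set.mem_ofPred_eq, Set.forall_mem_image, Prod.map_fst, Prod.map_snd,
    GTerm.eval_map, hφ.eq_iff]

theorem EquationallyNoetherian.of_injective {φ : G →* H} (hφ : Injective φ)
    (hH : EquationallyNoetherian H) : EquationallyNoetherian G := by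
  intro n S
  obtain ⟨S', hS', hfin, hsol⟩ := Set.exists_subset_image_finite_and.mp
    (hH n (Prod.map (GTerm.map φ) (GTerm.map φ) '' S))
  refine ⟨S', hS', hfin, Set.ext fun v => ?_⟩
  rw [← comp_mem_solSet_map_iff hφ, hsol, comp_mem_solSet_map_iff hφ]

end Transfer

section Centralizer

variable {H : Type} [Group H]

def centralizerSystem (C : Set H) : Set (GTerm H 1 × GTerm H 1) :=
  (fun c => (.mul (.const c) (.var 0), .mul (.var 0) (.const c))) '' C

theorem mem_solSet_centralizerSystem_iff {C : Set H} {v : Fin 1 → H} :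
    v ∈ SolSet (centralizerSystem C) ↔ v 0 ∈ Set.centralizer C := by
  simp [SolSet, centralizerSystem, GTerm.eval, Set.mem_centralizer_iff]

theorem EquationallyNoetherian.exists_finite_centralizer_eq_s17 (hH : EquationallyNoetherian H)
    (C : Set H) : ∃ C' ⊆ C, C'.Finite ∧ Set.centralizer C' = Set.centralizer C := by
  obtain ⟨C', hC', hfin, hsol⟩ := Set.exists_subset_image_finite_and.mp
    (hH 1 (centralizerSystem C))
  have hsol : SolSet (centralizerSystem C') = SolSet (centralizerSystem C) := hsol
  refine ⟨C', hC', hfin, Set.ext fun x => ?_⟩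
  simpa only [mem_solSet_centralizerSystem_iff] using
    Iff.of_eq (congrArg ((fun _ => x) ∈ ·) hsol)

theorem not_equationallyNoetherian_of_commute (x c : ℕ → H)
    (hne : Pairwise fun m n => Commute (x m) (c n)) (hself : ∀ n, ¬ Commute (x n) (c n)) :
    ¬ EquationallyNoetherian H := by
  intro hH
  have hc : Injective c := fun m n h => by_contra fun hmn => hself m (h ▸ hne hmn)
  obtain ⟨C', hC', hfin, hcent⟩ := hH.exists_finite_centralizer_eq_s17 (Set.range c)
  obtain ⟨m, hm⟩ := (hfin.preimage hc.injOn).infinite_compl.nonempty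
  have hxm : x m ∈ Set.centralizer C' := by
    intro y hy
    obtain ⟨n, rfl⟩ := hC' hy
    have hnm : n ≠ m := fun h => hm (h ▸ hy)
    exact (hne hnm.symm).eq.symm
  rw [hcent] at hxm
  exact hself m (hxm (c m) ⟨m, rfl⟩).symm

end Centralizer

theorem mulSingle_mem_restrictedPower {G : Type} [Group G] (n : ℕ) (g : G) :
    Pi.mulSingle n g ∈ restrictedPower G :=
  (Set.finite_singleton n).subset Pi.mulSupport_mulSingle_subset

theorem restrictedPower_not_equationallyNoetherian {G : Type} [Group G] {a b : G}
    (hab : ¬ Commute a b) : ¬ EquationallyNoetherian (restrictedPower G) :=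
  not_equationallyNoetherian_of_commute
    (fun n => ⟨Pi.mulSingle n a, mulSingle_mem_restrictedPower n a⟩)
    (fun n => ⟨Pi.mulSingle n b, mulSingle_mem_restrictedPower n b⟩)
    (fun _ _ hmn => Subtype.ext (Pi.mulSingle_commute (f := fun _ => G) hmn a b))
    (fun n h => hab (by
      simpa using (h.map (restrictedPower G).subtype).map (Pi.evalMonoidHom (fun _ => G) n)))

section Embedding

variable (G : Type) {A : Type} [Group G]

theorem extendByOne_mem_resBase (e : ℕ ↪ A) (f : restrictedPower G) :
    ExtendByOne.hom G e f ∈ resBase G A := by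
  change (mulSupport (extend e f.1 1)).Finite
  rw [mulSupport_extend_one e.injective]
  exact f.2.image e

variable (A) [Group A] [Infinite A]

theorem exists_injective_restrictedPower_wreathRes :
    ∃ φ : restrictedPower G →* WreathRes G A, Injective φ :=
  let e := Infinite.natEmbedding A
  ⟨SemidirectProduct.inl.comp <|
      ((ExtendByOne.hom G e).comp (restrictedPower G).subtype).codRestrict _
        (extendByOne_mem_resBase G e),
    SemidirectProduct.inl_injective.comp fun _ _ h =>
      Subtype.ext (extend_injective e.injective 1 (congrArg Subtype.val h))⟩

theorem exists_injective_restrictedPower_wreathFull :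
    ∃ φ : restrictedPower G →* WreathFull G A, Injective φ :=
  let e := Infinite.natEmbedding A
  ⟨SemidirectProduct.inl.comp ((ExtendByOne.hom G e).comp (restrictedPower G).subtype),
    SemidirectProduct.inl_injective.comp
      ((extend_injective e.injective 1).comp Subtype.val_injective)⟩

end Embedding

/-- Let `W = G wr A` be the restricted or unrestricted wreath product of a non-abelian
group `G` and an infinite group `A`. Then the restricted countable direct power
`G^(∞)` embeds into `W`; consequently `W` is not equationally Noetherian. -/
theorem wreath_product_not_equationally_noetherian
    (G A : Type) [Group G] [Group A]
    (hna : ∃ a b : G, a * b ≠ b * a) (hinf : Infinite A) :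
    ((∃ φ : ↥(restrictedPower G) →* WreathRes G A, Function.Injective φ) ∧
      ¬ EquationallyNoetherian (WreathRes G A)) ∧
    ((∃ φ : ↥(restrictedPower G) →* WreathFull G A, Function.Injective φ) ∧
      ¬ EquationallyNoetherian (WreathFull G A)) := by
  have := hinf
  obtain ⟨a, b, hab⟩ := hna
  have hG : ¬ EquationallyNoetherian (restrictedPower G) :=
    restrictedPower_not_equationallyNoetherian hab
  obtain ⟨φ, hφ⟩ := exists_injective_restrictedPower_wreathRes G A
  obtain ⟨ψ, hψ⟩ := exists_injective_restrictedPower_wreathFull G A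
  exact ⟨⟨⟨φ, hφ⟩, fun h => hG (h.of_injective hφ)⟩, ⟨ψ, hψ⟩, fun h => hG (h.of_injective hψ)⟩
end
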